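/- Suppose that for ℙ-almost every sample point the map λ ↦ L(X, Y, I, λ) is nonincreasing on [0, ∞), where (X, Y, I) has the common distribution of the sample. Then Err_δ(λ, ε) := ℙ( ∃ λ' ∈ [0, λ] : L(X, Y, I, λ') ≤ δ < L(X, Y, I, λ + ε) ) = 0 for every λ ≥ 0 and ε > 0. Consequently, the step-up procedure is exactly valid: with S̃_j := inf{λ > 0 : L(X_j, Y_j, I_j, λ) ≤ δ}, k := ⌈(1−α)(n+1)⌉ ≤ n, and λ̂^up the k-th smallest of S̃_1, …, S̃_n, one has ℙ( L(X_{n+1}, Y_{n+1}, I_{n+1}, λ̂^up + ε) ≤ δ ) ≥ 1 − α for every ε > 0. -/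

import Mathlib

/-!
The first claim is immediate from monotonicity: an outcome in the event defining `Err` has
`L(λ') ≤ δ < L(λ + ε)` with `λ' ≤ λ + ε`.

For the step-up guarantee let `T(z) = inf {λ > 0 : L(z, λ) ≤ δ}`, so that `S̃_j = T(Z_j)`.
The scores `T(Z_1), …, T(Z_{n+1})` are i.i.d., hence exchangeable, and at most `n + 1 - k` of
them can have `k` strictly smaller scores; so the test score has fewer than `k` strictly smaller
calibration scores with probability at least `k / (n + 1) ≥ 1 - α`. On that event
`T(Z_{n+1}) ≤ λ̂^up < λ̂^up + ε`, so some `λ' < λ̂^up + ε` has `L(λ') ≤ δ`, and monotonicity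
gives `L(λ̂^up + ε) ≤ δ`. Since `λ ↦ L(z, λ)` is locally constant to the right of every point,
the infimum defining `T` may be taken over rationals, which makes `T` measurable.
-/

open MeasureTheory ProbabilityTheory Set

/-- The False Probe Proportion (FPP) loss of the threshold predictive set `C^s_λ(x)`
on an instance `z = (x, y, I)`. -/
noncomputable def fpp {𝒳 𝒴 ι : Type*} [Fintype ι]
    (φ : ι → 𝒴 → ℝ) (s : ι → 𝒳 → ℝ) (z : 𝒳 × 𝒴 × Finset ι) (lam : ℝ) : ℝ :=
  (Nat.card {i : ι // i ∈ z.2.2 ∧ lam < -(φ i z.2.1) * s i z.1} : ℝ) /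
    max 1 (Nat.card {i : ι // i ∈ z.2.2 ∧ lam < |s i z.1|} : ℝ)

/-- The `k`-th smallest value (k-th order statistic, `1 ≤ k ≤ n`) among `v 0, …, v (n-1)`. -/
noncomputable def kthSmallest {n : ℕ} (v : Fin n → ℝ) (k : ℕ) : ℝ :=
  sInf {t : ℝ | k ≤ Nat.card {j : Fin n // v j ≤ t}}

open Finset Filter Topology

/- Every index of the filtered set scores at least the set's minimum, so the `k` indices
scoring strictly below that minimum lie outside it. -/
theorem card_filter_le_card_filter_lt_le {ι α : Type*} [Fintype ι] [LinearOrder α]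
    (t : ι → α) (k : ℕ) :
    #{m | k ≤ #{j | t j < t m}} ≤ Fintype.card ι - k := by
  classical
  set B : Finset ι := {m | k ≤ #{j | t j < t m}}
  rcases B.eq_empty_or_nonempty with hB | hB
  · simp [hB]
  obtain ⟨m₀, hm₀, hmin⟩ := B.exists_min_image t hB
  have hk : k ≤ #{j | t j < t m₀} := (mem_filter.1 hm₀).2
  have hdisj : Disjoint B ({j | t j < t m₀} : Finset ι) :=
    disjoint_left.2 fun j hjB hj => (hmin j hjB).not_gt (mem_filter.1 hj).2
  have := (card_union_of_disjoint hdisj).symm.trans_le (card_le_univ _)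
  omega

theorem le_kthSmallest_of_card_lt {n k : ℕ} (hkn : k ≤ n) (v : Fin n → ℝ) {a : ℝ}
    (h : #{j | v j < a} < k) : a ≤ kthSmallest v k := by
  classical
  have hcard : ∀ t, Nat.card {j // v j ≤ t} = #{j | v j ≤ t} := fun t => by
    rw [Nat.card_eq_fintype_card, Fintype.card_subtype]
  refine le_csInf ?_ fun t ht => not_lt.1 fun hta => ?_
  · obtain ⟨t, ht⟩ := Finite.bddAbove_range v
    refine ⟨t, ?_⟩
    simp only [Set.mem_ofPred_eq, hcard]
    rw [filter_true_of_mem fun j _ => ht ⟨j, rfl⟩, card_univ, Fintype.card_fin]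
    exact hkn
  · have hsub : ({j | v j ≤ t} : Finset (Fin n)) ⊆ ({j | v j < a} : Finset (Fin n)) :=
      monotone_filter_right _ fun j _ (hj : v j ≤ t) => hj.trans_lt hta
    have : k ≤ #{j | v j ≤ t} := by rw [← hcard]; exact ht
    exact (this.trans (card_le_card hsub)).not_gt h

theorem card_filter_lt_last {α : Type*} [LinearOrder α] {n : ℕ} (t : Fin (n + 1) → α) :
    #{j | t j < t (Fin.last n)} = #{j : Fin n | t j.castSucc < t (Fin.last n)} := by
  simp only [card_filter, Fin.sum_univ_castSucc, lt_irrefl, if_false, add_zero]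

theorem eventually_forall_lt_iff_lt_nhdsGE {ι α : Type*} [Finite ι] [TopologicalSpace α]
    [LinearOrder α] [OrderTopology α] (c : ι → α) (a : α) :
    ∀ᶠ x in 𝓝[≥] a, ∀ i, x < c i ↔ a < c i := by
  refine eventually_all.2 fun i => ?_
  by_cases h : a < c i
  · filter_upwards [nhdsWithin_le_nhds (eventually_lt_nhds h)] with x hx using iff_of_true hx h
  · filter_upwards [self_mem_nhdsWithin] with x (hx : a ≤ x)
    exact iff_of_false (fun hxc => h (hx.trans_lt hxc)) h

section Score

variable {𝒳 𝒴 ι : Type*} [Fintype ι] (φ : ι → 𝒴 → ℝ) (s : ι → 𝒳 → ℝ)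

theorem fpp_eventually_eq_nhdsGE (z : 𝒳 × 𝒴 × Finset ι) (lam : ℝ) :
    ∀ᶠ q in 𝓝[≥] lam, fpp φ s z q = fpp φ s z lam := by
  filter_upwards [eventually_forall_lt_iff_lt_nhdsGE (fun i => -(φ i z.2.1) * s i z.1) lam,
    eventually_forall_lt_iff_lt_nhdsGE (fun i => |s i z.1|) lam] with q hwrong hanswered
  simp only [fpp, hwrong, hanswered]

theorem fpp_eventually_eq_zero_atTop (z : 𝒳 × 𝒴 × Finset ι) :
    ∀ᶠ lam in atTop, fpp φ s z lam = 0 := by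
  filter_upwards [eventually_all.2 fun i => eventually_ge_atTop (-(φ i z.2.1) * s i z.1)]
    with lam hlam
  have : IsEmpty {i : ι // i ∈ z.2.2 ∧ lam < -(φ i z.2.1) * s i z.1} :=
    ⟨fun i => (hlam i).not_gt i.2.2⟩
  rw [fpp, Nat.card_of_isEmpty, Nat.cast_zero, zero_div]

/-- The paper's step-up score `S̃ = inf {λ > 0 : L(x, y, I, λ) ≤ δ}`. -/
noncomputable def stepUpScore (δ : ℝ) (z : 𝒳 × 𝒴 × Finset ι) : ℝ :=
  sInf {lam : ℝ | 0 < lam ∧ fpp φ s z lam ≤ δ}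

variable {φ s}

theorem stepUpScore_lt_iff {δ : ℝ} (hδ : 0 ≤ δ) (z : 𝒳 × 𝒴 × Finset ι) (t : ℝ) :
    stepUpScore φ s δ z < t ↔ ∃ lam, 0 < lam ∧ fpp φ s z lam ≤ δ ∧ lam < t := by
  have hne : {lam : ℝ | 0 < lam ∧ fpp φ s z lam ≤ δ}.Nonempty :=
    ((eventually_gt_atTop 0).and ((fpp_eventually_eq_zero_atTop φ s z).mono
      fun lam h => h.trans_le hδ)).exists
  rw [stepUpScore, csInf_lt_iff ⟨0, fun lam h => h.1.le⟩ hne]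
  simp only [Set.mem_ofPred_eq, and_assoc]

theorem stepUpScore_lt_iff_exists_rat {δ : ℝ} (hδ : 0 ≤ δ) (z : 𝒳 × 𝒴 × Finset ι) (t : ℝ) :
    stepUpScore φ s δ z < t ↔ ∃ q : ℚ, 0 < (q : ℝ) ∧ fpp φ s z q ≤ δ ∧ (q : ℝ) < t := by
  rw [stepUpScore_lt_iff hδ]
  refine ⟨fun ⟨lam, hpos, hle, hlt⟩ => ?_, fun ⟨q, hq⟩ => ⟨q, hq⟩⟩
  obtain ⟨u, hu, hconst⟩ := mem_nhdsGE_iff_exists_Ico_subset.1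
    (fpp_eventually_eq_nhdsGE φ s z lam)
  obtain ⟨q, hlq, hqu⟩ := exists_rat_btwn (lt_min hu hlt)
  refine ⟨q, hpos.trans hlq, ?_, hqu.trans_le (min_le_right _ _)⟩
  rw [hconst ⟨hlq.le, hqu.trans_le (min_le_left _ _)⟩]
  exact hle

variable [MeasurableSpace 𝒳] [MeasurableSpace 𝒴] [MeasurableSpace (Finset ι)]
  [MeasurableSingletonClass (Finset ι)]

theorem measurable_natCard_mem_and_lt {c : ι → 𝒳 × 𝒴 × Finset ι → ℝ}
    (hc : ∀ i, Measurable (c i)) (lam : ℝ) :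
    Measurable fun z : 𝒳 × 𝒴 × Finset ι => (Nat.card {i // i ∈ z.2.2 ∧ lam < c i z} : ℝ) := by
  classical
  simp only [Nat.card_eq_fintype_card, Fintype.card_subtype, card_filter, Nat.cast_sum,
    Nat.cast_ite, Nat.cast_one, Nat.cast_zero]
  refine Finset.measurable_sum _ fun i _ => Measurable.ite ?_ measurable_const measurable_const
  exact (measurable_snd.snd (Set.to_countable {I : Finset ι | i ∈ I}).measurableSet).inter
    (measurableSet_lt measurable_const (hc i))

theorem measurable_fpp (hφ : ∀ i, Measurable (φ i)) (hs : ∀ i, Measurable (s i)) (lam : ℝ) :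
    Measurable fun z : 𝒳 × 𝒴 × Finset ι => fpp φ s z lam :=
  (measurable_natCard_mem_and_lt (fun i => ((hφ i).comp measurable_snd.fst).neg.mul
      ((hs i).comp measurable_fst)) lam).div
    (measurable_const.max (measurable_natCard_mem_and_lt
      (fun i => ((hs i).comp measurable_fst).abs) lam))

theorem measurable_stepUpScore (hφ : ∀ i, Measurable (φ i)) (hs : ∀ i, Measurable (s i))
    {δ : ℝ} (hδ : 0 ≤ δ) : Measurable (stepUpScore φ s δ : 𝒳 × 𝒴 × Finset ι → ℝ) := by
  refine measurable_of_Iio fun t => ?_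
  have : stepUpScore φ s δ ⁻¹' Iio t =
      ⋃ q : ℚ, {z | 0 < (q : ℝ) ∧ fpp φ s z q ≤ δ ∧ (q : ℝ) < t} := by
    ext z
    simp only [Set.mem_preimage, Set.mem_Iio, Set.mem_iUnion, Set.mem_ofPred_eq]
    exact stepUpScore_lt_iff_exists_rat hδ z t
  rw [this]
  exact MeasurableSet.iUnion fun q => (MeasurableSet.const _).inter
    ((measurableSet_le (measurable_fpp hφ hs q) measurable_const).inter (MeasurableSet.const _))

end Score

theorem measurableSet_le_card_filter_lt {ι : Type*} [Fintype ι] (k : ℕ) (m : ι) :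
    MeasurableSet {w : ι → ℝ | k ≤ #{j | w j < w m}} := by
  have : Measurable fun w : ι → ℝ => #{j | w j < w m} := by
    simp only [card_filter]
    exact Finset.measurable_sum _ fun j _ => Measurable.ite
      (measurableSet_lt (measurable_pi_apply j) (measurable_pi_apply m)) measurable_const
      measurable_const
  exact this .of_discrete

section Exchangeable

variable {Ω ι : Type*} [MeasurableSpace Ω] {P : Measure Ω} [Fintype ι]

theorem ProbabilityTheory.iIndepFun.identDistrib_comp_perm {β : Type*} [MeasurableSpace β]
    {V : ι → Ω → β} (hV : ∀ i, Measurable (V i)) (hindep : iIndepFun V P) {i₀ : ι}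
    (hident : ∀ i, IdentDistrib (V i) (V i₀) P P) (σ : Equiv.Perm ι) :
    IdentDistrib (fun ω i => V (σ i) ω) (fun ω i => V i ω) P P := by
  have := hindep.isProbabilityMeasure
  have := Measure.isProbabilityMeasure_map (μ := P) (hV i₀).aemeasurable
  have hjoint : P.map (fun ω i => V i ω) = Measure.pi fun _ => P.map (V i₀) := by
    rw [hindep.map_fun_eq_pi_map fun i => (hV i).aemeasurable]
    simp only [fun i => (hident i).map_eq]
  have hperm : MeasurePreserving (fun w : ι → β => w ∘ σ) (Measure.pi fun _ => P.map (V i₀))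
      (Measure.pi fun _ => P.map (V i₀)) := by
    convert (measurePreserving_piCongrLeft (fun _ => P.map (V i₀)) σ).symm
    ext w
    simp [MeasurableEquiv.piCongrLeft, Equiv.piCongrLeft_symm_apply]
  refine ⟨(measurable_pi_lambda _ fun i => hV (σ i)).aemeasurable,
    (measurable_pi_lambda _ hV).aemeasurable, ?_⟩
  have hc : (fun ω i => V (σ i) ω) = (fun w : ι → β => w ∘ σ) ∘ fun ω i => V i ω := rfl
  rw [hc, ← Measure.map_map hperm.measurable (measurable_pi_lambda _ hV), hjoint, hperm.map_eq]

variable {V : ι → Ω → ℝ} (hV : ∀ i, Measurable (V i)) (hindep : iIndepFun V P) {i₀ : ι}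
  (hident : ∀ i, IdentDistrib (V i) (V i₀) P P)
include hV hindep hident

theorem measure_le_card_filter_lt_eq (k : ℕ) (m m' : ι) :
    P {ω | k ≤ #{j | V j ω < V m' ω}} = P {ω | k ≤ #{j | V j ω < V m ω}} := by
  classical
  set σ := Equiv.swap m m'
  have hσ : {ω | k ≤ #{j | V j ω < V m' ω}} =
      (fun ω i => V (σ i) ω) ⁻¹' {w | k ≤ #{j | w j < w m}} := by
    ext ω
    simp only [Set.mem_preimage, Set.mem_ofPred_eq, σ, Equiv.swap_apply_left]
    rw [card_equiv σ (s := {j | V (σ j) ω < V m' ω}) (t := {j | V j ω < V m' ω}) (by simp)]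
  rw [hσ]
  exact (hindep.identDistrib_comp_perm hV hident σ).measure_mem_eq
    (measurableSet_le_card_filter_lt k m)

open scoped ENNReal in
theorem card_mul_measure_le_card_filter_lt_le (k : ℕ) (m : ι) :
    (Fintype.card ι : ℝ≥0∞) * P {ω | k ≤ #{j | V j ω < V m ω}} ≤ (Fintype.card ι - k : ℕ) := by
  classical
  set E : ι → Set Ω := fun m => {ω | k ≤ #{j | V j ω < V m ω}}
  have hE : ∀ m, MeasurableSet (E m) := fun m =>
    measurable_pi_lambda _ hV (measurableSet_le_card_filter_lt k m)
  calc (Fintype.card ι : ℝ≥0∞) * P (E m) = ∑ m', P (E m') := by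
        simp [E, measure_le_card_filter_lt_eq hV hindep hident k m]
    _ = ∫⁻ ω, ∑ m', (E m').indicator 1 ω ∂P := by
        rw [lintegral_finsetSum _ fun m' _ => measurable_one.indicator (hE m')]
        simp only [lintegral_indicator_one (hE _)]
    _ ≤ ∫⁻ _, ((Fintype.card ι - k : ℕ) : ℝ≥0∞) ∂P := lintegral_mono fun ω => by
        simp only [Set.indicator_apply, Pi.one_apply]
        rw [Finset.sum_boole]
        exact Nat.cast_le.2 ((card_filter_le_card_filter_lt_le (V · ω) k).trans_eq' (by congr))
    _ = (Fintype.card ι - k : ℕ) := by simp [hindep.isProbabilityMeasure]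

theorem le_card_mul_measureReal_card_filter_lt_lt {k : ℕ} (hk : k ≤ Fintype.card ι) (m : ι) :
    (k : ℝ) ≤ Fintype.card ι * P.real {ω | #{j | V j ω < V m ω} < k} := by
  have := hindep.isProbabilityMeasure
  have hcompl : {ω | #{j | V j ω < V m ω} < k} = {ω | k ≤ #{j | V j ω < V m ω}}ᶜ := by
    ext ω; simp
  have hbound := ENNReal.toReal_mono (ENNReal.natCast_ne_top _)
    (card_mul_measure_le_card_filter_lt_le hV hindep hident k m)
  rw [ENNReal.toReal_mul, ENNReal.toReal_natCast, ENNReal.toReal_natCast, Nat.cast_sub hk,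
    ← measureReal_def] at hbound
  have hE : MeasurableSet {ω | k ≤ #{j | V j ω < V m ω}} :=
    measurable_pi_lambda _ hV (measurableSet_le_card_filter_lt k m)
  rw [hcompl, probReal_compl_eq_one_sub hE]
  linarith

end Exchangeable

theorem step_up_exact_validity_of_monotone_general
    {Ω : Type*} [MeasurableSpace Ω] (P : Measure Ω) [IsProbabilityMeasure P]
    {𝒳 𝒴 ι : Type*} [MeasurableSpace 𝒳] [MeasurableSpace 𝒴] [Fintype ι]
    [MeasurableSpace (Finset ι)] [MeasurableSingletonClass (Finset ι)]
    (φ : ι → 𝒴 → ℝ)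
    (hφmeas : ∀ i, Measurable (φ i))
    (s : ι → 𝒳 → ℝ) (hsmeas : ∀ i, Measurable (s i))
    (n : ℕ)
    -- the i.i.d. sample `(X_j, Y_j, I_j)` for `j = 1, …, n+1`
    (Z : Fin (n + 1) → Ω → 𝒳 × 𝒴 × Finset ι)
    (hZmeas : ∀ j, Measurable (Z j))
    (hindep : iIndepFun Z P)
    (hident : ∀ j, IdentDistrib (Z j) (Z 0) P P)
    (δ : ℝ) (hδ : 0 ≤ δ)
    (α : ℝ)
    (hk : ⌈(1 - α) * (n + 1 : ℝ)⌉₊ ≤ n)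
    -- for `ℙ`-almost every sample point, the loss is nonincreasing in `λ` on `[0, ∞)`
    -- (under the common distribution, represented by the test point)
    (hmono : ∀ᵐ ω ∂P, ∀ lam₁ lam₂, 0 ≤ lam₁ → lam₁ ≤ lam₂ →
      fpp φ s (Z (Fin.last n) ω) lam₂ ≤ fpp φ s (Z (Fin.last n) ω) lam₁)
    -- the step-up nonconformity scores on the calibration sample
    (S : Ω → Fin n → ℝ)
    (hS : ∀ ω j, S ω j =
      sInf {lam : ℝ | 0 < lam ∧ fpp φ s (Z j.castSucc ω) lam ≤ δ})
    (lamhat : Ω → ℝ)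
    (hlamhat : ∀ ω, lamhat ω = kthSmallest (S ω) ⌈(1 - α) * (n + 1 : ℝ)⌉₊)
    -- `Err lam eps = ℙ(∃ λ' ∈ [0, λ], L(X,Y,I,λ') ≤ δ < L(X,Y,I,λ+ε))`
    (Err : ℝ → ℝ → ℝ)
    (hErr : ∀ lam eps, Err lam eps =
      (P {ω | ∃ lam', 0 ≤ lam' ∧ lam' ≤ lam ∧
        fpp φ s (Z (Fin.last n) ω) lam' ≤ δ ∧
        δ < fpp φ s (Z (Fin.last n) ω) (lam + eps)}).toReal) :
    (∀ lam ≥ (0 : ℝ), ∀ eps > (0 : ℝ), Err lam eps = 0) ∧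
      ∀ eps > (0 : ℝ),
        1 - α ≤ (P {ω | fpp φ s (Z (Fin.last n) ω) (lamhat ω + eps) ≤ δ}).toReal := by
  refine ⟨fun lam _ eps heps => ?_, fun eps heps => ?_⟩
  · rw [hErr, measure_eq_zero_iff_ae_notMem.2, ENNReal.toReal_zero]
    filter_upwards [hmono] with ω hω ⟨lam', hlam'0, hlam'le, hgood, hbad⟩
    linarith [hω lam' (lam + eps) hlam'0 (by linarith)]
  set k := ⌈(1 - α) * (n + 1 : ℝ)⌉₊
  set T : 𝒳 × 𝒴 × Finset ι → ℝ := stepUpScore φ s δ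
  have hT : Measurable T := measurable_stepUpScore hφmeas hsmeas hδ
  set A := {ω | #{j | (T ∘ Z j) ω < (T ∘ Z (Fin.last n)) ω} < k}
  have hA : (k : ℝ) ≤ (n + 1) * P.real A := by
    have := le_card_mul_measureReal_card_filter_lt_lt (fun j => hT.comp (hZmeas j))
      (hindep.comp _ fun _ => hT) (fun j => (hident j).comp hT)
      (k := k) (by simp only [Fintype.card_fin]; omega) (Fin.last n)
    rwa [Fintype.card_fin, Nat.cast_add_one] at this
  have hAG : A ≤ᵐ[P] {ω | fpp φ s (Z (Fin.last n) ω) (lamhat ω + eps) ≤ δ} := by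
    filter_upwards [hmono] with ω hω (hrank : _ < k)
    rw [card_filter_lt_last (fun j => (T ∘ Z j) ω)] at hrank
    have hle : T (Z (Fin.last n) ω) ≤ lamhat ω := by
      rw [hlamhat, show S ω = fun j => T (Z j.castSucc ω) from funext (hS ω)]
      exact le_kthSmallest_of_card_lt hk _ hrank
    obtain ⟨lam', hlam'0, hgood, hlt⟩ :=
      (stepUpScore_lt_iff hδ _ (lamhat ω + eps)).1 (by linarith)
    exact (hω lam' _ hlam'0.le hlt.le).trans hgood
  have hceil : (1 - α) * (n + 1 : ℝ) ≤ k := Nat.le_ceil _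
  calc 1 - α ≤ P.real A := le_of_mul_le_mul_right (by linarith) (by positivity : (0 : ℝ) < n + 1)
    _ ≤ _ := ENNReal.toReal_mono (measure_ne_top _ _) (measure_mono_ae hAG)

/-- If the FPP loss is almost surely nonincreasing in the threshold `λ`, then
`Err_δ(λ, ε) = 0` for all `λ ≥ 0`, `ε > 0`, and the step-up procedure is exactly valid. -/
theorem step_up_exact_validity_of_monotone
    {Ω : Type*} [MeasurableSpace Ω] (P : Measure Ω) [IsProbabilityMeasure P]
    {𝒳 𝒴 ι : Type*} [MeasurableSpace 𝒳] [MeasurableSpace 𝒴] [Fintype ι] [Nonempty ι]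
    [MeasurableSpace (Finset ι)] [MeasurableSingletonClass (Finset ι)]
    (φ : ι → 𝒴 → ℝ) (hφ : ∀ i y, φ i y = 1 ∨ φ i y = -1)
    (hφmeas : ∀ i, Measurable (φ i))
    (s : ι → 𝒳 → ℝ) (hsmeas : ∀ i, Measurable (s i))
    (n : ℕ)
    -- the i.i.d. sample `(X_j, Y_j, I_j)` for `j = 1, …, n+1`
    (Z : Fin (n + 1) → Ω → 𝒳 × 𝒴 × Finset ι)
    (hZmeas : ∀ j, Measurable (Z j))
    (hindep : iIndepFun Z P)
    (hident : ∀ j, IdentDistrib (Z j) (Z 0) P P)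
    (δ : ℝ) (hδ : 0 ≤ δ)
    (α : ℝ) (hα : α ∈ Set.Ioo (0 : ℝ) 1)
    (hk : ⌈(1 - α) * (n + 1 : ℝ)⌉₊ ≤ n)
    -- for `ℙ`-almost every sample point, the loss is nonincreasing in `λ` on `[0, ∞)`
    -- (under the common distribution, represented by the test point)
    (hmono : ∀ᵐ ω ∂P, ∀ lam₁ lam₂, 0 ≤ lam₁ → lam₁ ≤ lam₂ →
      fpp φ s (Z (Fin.last n) ω) lam₂ ≤ fpp φ s (Z (Fin.last n) ω) lam₁)
    -- the step-up nonconformity scores on the calibration sample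
    (S : Ω → Fin n → ℝ)
    (hS : ∀ ω j, S ω j =
      sInf {lam : ℝ | 0 < lam ∧ fpp φ s (Z j.castSucc ω) lam ≤ δ})
    (lamhat : Ω → ℝ)
    (hlamhat : ∀ ω, lamhat ω = kthSmallest (S ω) ⌈(1 - α) * (n + 1 : ℝ)⌉₊)
    -- `Err lam eps = ℙ(∃ λ' ∈ [0, λ], L(X,Y,I,λ') ≤ δ < L(X,Y,I,λ+ε))`
    (Err : ℝ → ℝ → ℝ)
    (hErr : ∀ lam eps, Err lam eps =
      (P {ω | ∃ lam', 0 ≤ lam' ∧ lam' ≤ lam ∧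
        fpp φ s (Z (Fin.last n) ω) lam' ≤ δ ∧
        δ < fpp φ s (Z (Fin.last n) ω) (lam + eps)}).toReal) :
    (∀ lam ≥ (0 : ℝ), ∀ eps > (0 : ℝ), Err lam eps = 0) ∧
      ∀ eps > (0 : ℝ),
        1 - α ≤ (P {ω | fpp φ s (Z (Fin.last n) ω) (lamhat ω + eps) ≤ δ}).toReal :=
  step_up_exact_validity_of_monotone_general P φ hφmeas s hsmeas n Z hZmeas hindep hident δ hδ α hk
    hmono S hS lamhat hlamhat Err hErr
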